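/- Let G be a map on an orientable surface of genus g and let {B_1,…,B_{2g}} be a set of cycles of G forming a homology-basis. An orientation of the primal-dual completion Ĝ is a Schnyder orientation if and only if it is a mod3-orientation such that γ(B_i) ≡ 0 (mod 3) for all 1 ≤ i ≤ 2g. -/

import Mathlib

/-
Common combinatorial framework.

Maps on compact orientable surfaces are formalized as rotation systems
(combinatorial maps): a finite set of darts together with a permutation `σ`
(counterclockwise successor around each vertex) and a fixed-point-free
involution `α` (reversal of darts).  Vertices are the orbits of `σ`, edges the
orbits of `α`, and the (counterclockwise) facial walks are the orbits of
`σ⁻¹ * α`.  The genus is recovered from the Euler characteristic.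

Homology of the map is formalized by flows: integer-valued functions on darts;
the subgroup generated by the facial flows plays the role of the boundary
subgroup, two flows being homologous when their difference belongs to it.
Contractibility is formalized combinatorially: null-homotopy of closed walks is
generated by insertion/deletion of spurs and of facial boundaries (and rotation
of the base point).

Schnyder woods are formalized by their angle labellings (corners ≃ darts, the
corner of dart `d` being the corner between `d` and `σ d` at the tail of `d`);
this follows the paper, where (generalized) Schnyder woods are exactly the
EDGE, ℕ*-VERTEX, ℕ*-FACE angle labellings, and where around an edge `{d, α d}`
the four corners in clockwise order are `d, σ⁻¹ (α d), α d, σ⁻¹ d`.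
-/

noncomputable section
open scoped Classical

namespace Schnyder

/-- The setoid whose classes are the orbits (cycles) of a permutation;
for the vertex rotation `σ` the classes are the vertices of the map, for the
edge involution `α` they are the edges, for the face permutation they are the
faces. -/
def permSetoid {X : Type*} (f : Equiv.Perm X) : Setoid X where
  r := f.SameCycle
  iseqv := ⟨fun x => ⟨0, by simp⟩, fun h => h.symm, fun h h' => h.trans h'⟩

/-- The number of orbits of a permutation. -/
def numOrbits {X : Type*} (f : Equiv.Perm X) : ℕ :=
  Nat.card (Quotient (permSetoid f))

/-- `ccwSector σ x y d` : rotating counterclockwise (iterating `σ`) from the dart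
`x`, the dart `d` is met strictly after `x` and before the first occurrence of
`y`; i.e. `d` lies in the counterclockwise sector from `x` to `y` (both
excluded). -/
def ccwSector {X : Type*} (σ : Equiv.Perm X) (x y d : X) : Prop :=
  ∃ k : ℕ, 0 < k ∧ (σ ^ k) x = d ∧ ∀ l : ℕ, 0 < l → l ≤ k → (σ ^ l) x ≠ y

def cyclicNext {n : ℕ} (h : 0 < n) (k : Fin n) : Fin n :=
  ⟨((k : ℕ) + 1) % n, Nat.mod_lt _ h⟩

def cyclicPrev {n : ℕ} (h : 0 < n) (k : Fin n) : Fin n :=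
  ⟨((k : ℕ) + (n - 1)) % n, Nat.mod_lt _ h⟩

/-- The face permutation: its orbits are the (counterclockwise) facial walks of
the map with vertex rotation `σ` and edge involution `α`. -/
def fperm {X : Type*} (σ α : Equiv.Perm X) : Equiv.Perm X := σ⁻¹ * α

/-- A closed walk in the map with vertex rotation `σ` and edge involution `α`:
a cyclic sequence of darts, consecutive darts being chained head-to-tail. -/
structure CWalk {X : Type*} (σ α : Equiv.Perm X) where
  n : ℕ
  pos : 0 < n
  darts : Fin n → X
  chain : ∀ k : Fin n, σ.SameCycle (α (darts k)) (darts (cyclicNext pos k))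

namespace CWalk

variable {X : Type*} {σ α : Equiv.Perm X}

/-- The characteristic flow of a closed walk. -/
def flow (W : CWalk σ α) : X → ℤ := fun d =>
  ∑ k : Fin W.n, ((if W.darts k = d then (1 : ℤ) else 0) - (if W.darts k = α d then 1 else 0))

/-- A closed walk is a cycle when it passes at most once through each vertex. -/
def IsCycle (W : CWalk σ α) : Prop :=
  ∀ k k' : Fin W.n, σ.SameCycle (W.darts k) (W.darts k') → k = k'

def Mem (W : CWalk σ α) (d : X) : Prop := ∃ k, W.darts k = d

/-- Two closed walks intersect when they share a vertex. -/
def Intersects (W W' : CWalk σ α) : Prop :=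
  ∃ k k', σ.SameCycle (W.darts k) (W'.darts k')

/-- `W'` is obtained from `W` by reversing all its edges. -/
def IsReversal (W W' : CWalk σ α) : Prop := ∀ d, W.Mem d ↔ W'.Mem (α d)

/-- Two closed walks use exactly the same darts. -/
def SameSupport (W W' : CWalk σ α) : Prop := ∀ d, W.Mem d ↔ W'.Mem d

/-- Edge-disjointness of two closed walks. -/
def EdgeDisjoint (W W' : CWalk σ α) : Prop :=
  ∀ d, W.Mem d → ¬ W'.Mem d ∧ ¬ W'.Mem (α d)

/-- The list of darts of a closed walk. -/
def toList (W : CWalk σ α) : List X := List.ofFn W.darts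

end CWalk

/-- Two (monochromatic) cycles cross when they intersect and are not reversal
of each other. -/
def CrossingCycles {X : Type*} {σ α : Equiv.Perm X} (W W' : CWalk σ α) : Prop :=
  W.Intersects W' ∧ ¬ W.IsReversal W'

/-- The characteristic flow of the counterclockwise facial walk of the face of
the dart `d0`. -/
def faceFlow {X : Type*} (σ α : Equiv.Perm X) (d0 : X) : X → ℤ := fun d =>
  (if (fperm σ α).SameCycle d0 d then (1 : ℤ) else 0)
    - (if (fperm σ α).SameCycle d0 (α d) then 1 else 0)

/-- The subgroup `𝔽` of flows generated by the (counterclockwise) facial walks. -/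
def facialSubgroup {X : Type*} (σ α : Equiv.Perm X) : AddSubgroup (X → ℤ) :=
  AddSubgroup.closure (Set.range (faceFlow σ α))

/-- Two flows are homologous when their difference belongs to `𝔽`. -/
def Homologous {X : Type*} (σ α : Equiv.Perm X) (f g : X → ℤ) : Prop :=
  f - g ∈ facialSubgroup σ α

/-- Two flows are reversely homologous when their sum belongs to `𝔽`. -/
def ReverselyHomologous {X : Type*} (σ α : Equiv.Perm X) (f g : X → ℤ) : Prop :=
  f + g ∈ facialSubgroup σ α

/-- Two flows are weakly homologous when they are homologous or reversely
homologous. -/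
def WeaklyHomologous {X : Type*} (σ α : Equiv.Perm X) (f g : X → ℤ) : Prop :=
  Homologous σ α f g ∨ ReverselyHomologous σ α f g

/-- Antisymmetric dart functions: the flows `ℤ^E` of the paper (with respect to
the reference orientation given by the darts). -/
def IsFlow {X : Type*} (α : Equiv.Perm X) (f : X → ℤ) : Prop := ∀ d, f (α d) = - f d

/-- A finite family of closed walks is a homology-basis when its classes
generate the first homology group: every closed walk equals, modulo the facial
subgroup, an integer combination of the family. -/
def IsHomologyBasis {X : Type*} (σ α : Equiv.Perm X) {ι : Type*} [Fintype ι]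
    (B : ι → CWalk σ α) : Prop :=
  ∀ W : CWalk σ α, ∃ μ : ι → ℤ, W.flow - ∑ i, μ i • (B i).flow ∈ facialSubgroup σ α

/-- `F` is the complete boundary list of one face (starting anywhere on it). -/
def IsFaceBoundary {X : Type*} (σ α : Equiv.Perm X) (F : List X) : Prop :=
  ∃ (d : X) (k : ℕ), 0 < k ∧ ((fperm σ α) ^ k) d = d ∧
    (∀ i : ℕ, 0 < i → i < k → ((fperm σ α) ^ i) d ≠ d) ∧
    F = (List.range k).map fun i => ((fperm σ α) ^ i) d

/-- Elementary combinatorial homotopy moves on closed walks: deletion of a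
spur, deletion of a facial boundary, rotation of the base point. -/
inductive HomotopyStep {X : Type*} (σ α : Equiv.Perm X) : List X → List X → Prop
  | spur (W₁ W₂ : List X) (d : X) : HomotopyStep σ α (W₁ ++ d :: α d :: W₂) (W₁ ++ W₂)
  | face (W₁ W₂ F : List X) (hF : IsFaceBoundary σ α F) :
      HomotopyStep σ α (W₁ ++ F ++ W₂) (W₁ ++ W₂)
  | rot (d : X) (W : List X) : HomotopyStep σ α (d :: W) (W ++ [d])

/-- A closed walk (given by its dart list) is contractible when it is
null-homotopic. -/
def NullHomotopic {X : Type*} (σ α : Equiv.Perm X) (W : List X) : Prop :=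
  Relation.EqvGen (HomotopyStep σ α) W []

/-! ### Schnyder angle labellings -/

/-- The EDGE pattern on the four corner labels in clockwise order around an
edge: either all four labels are equal (type 0 edge), or they are cyclically
`i-1, i, i, i+1` for some colour `i` (type 1 and type 2 edges). -/
def edgePattern (x : Fin 4 → ZMod 3) : Prop :=
  (∀ k, x k = x 0) ∨
    ∃ (i : ZMod 3) (j : Fin 4), x j = i - 1 ∧ x (j + 1) = i ∧ x (j + 2) = i ∧ x (j + 3) = i + 1

/-- The EDGE condition at the edge `{d, α d}`: in clockwise order around the
edge, the four incident corners are `d, σ⁻¹ (α d), α d, σ⁻¹ d`. -/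
def EdgeCond {X : Type*} (σ α : Equiv.Perm X) (lab : X → ZMod 3) (d : X) : Prop :=
  edgePattern ![lab d, lab (σ⁻¹ (α d)), lab (α d), lab (σ⁻¹ d)]

/-- An EDGE angle labelling (= Schnyder labelling). -/
def IsSchnyderLabeling {X : Type*} (σ α : Equiv.Perm X) (lab : X → ZMod 3) : Prop :=
  ∀ d, EdgeCond σ α lab d

/-- ℕ*-VERTEX (in presence of the EDGE condition): no vertex has all its
corners of the same colour. -/
def VertexNonconstant {X : Type*} (σ : Equiv.Perm X) (lab : X → ZMod 3) : Prop :=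
  ∀ d, ∃ d', σ.SameCycle d d' ∧ lab d' ≠ lab d

/-- ℕ*-FACE (in presence of the EDGE condition): no face has all its corners of
the same colour. -/
def FaceNonconstant {X : Type*} (σ α : Equiv.Perm X) (lab : X → ZMod 3) : Prop :=
  ∀ d, ∃ d', (fperm σ α).SameCycle d d' ∧ lab d' ≠ lab d

/-- A (generalized) Schnyder wood, presented by its angle labelling: an EDGE,
ℕ*-VERTEX, ℕ*-FACE angle labelling (on the torus this is exactly a toroidal
Schnyder wood). -/
def IsSchnyderWood {X : Type*} (σ α : Equiv.Perm X) (lab : X → ZMod 3) : Prop :=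
  IsSchnyderLabeling σ α lab ∧ VertexNonconstant σ lab ∧ FaceNonconstant σ α lab

/-- The dart `d` carries the outgoing direction of colour `i` of its edge:
its two adjacent corners at its tail are labelled `i - 1` (counterclockwise
side) and `i + 1` (clockwise side). -/
def OutDart {X : Type*} (σ : Equiv.Perm X) (lab : X → ZMod 3) (i : ZMod 3) (d : X) : Prop :=
  lab d = i - 1 ∧ lab (σ⁻¹ d) = i + 1

/-- A monochromatic cycle of colour `i` (an `i`-cycle): a directed cycle all of
whose darts are outgoing of colour `i`. -/
def IsMonoCycle {X : Type*} (σ α : Equiv.Perm X) (lab : X → ZMod 3) (i : ZMod 3)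
    (C : CWalk σ α) : Prop :=
  C.IsCycle ∧ ∀ k, OutDart σ lab i (C.darts k)

/-- Half-crossing Schnyder wood: some pair of monochromatic cycles of different
colours cross. -/
def HalfCrossingSW {X : Type*} (σ α : Equiv.Perm X) (lab : X → ZMod 3) : Prop :=
  ∃ (i j : ZMod 3) (C C' : CWalk σ α), i ≠ j ∧ IsMonoCycle σ α lab i C ∧
    IsMonoCycle σ α lab j C' ∧ CrossingCycles C C'

/-- `i`-crossing Schnyder wood: every `i`-cycle crosses every monochromatic
cycle of any other colour. -/
def ICrossingSW {X : Type*} (σ α : Equiv.Perm X) (lab : X → ZMod 3) (i : ZMod 3) : Prop :=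
  ∀ (j : ZMod 3) (C C' : CWalk σ α), j ≠ i → IsMonoCycle σ α lab i C →
    IsMonoCycle σ α lab j C' → CrossingCycles C C'

/-- Intersecting Schnyder wood. -/
def IntersectingSW {X : Type*} (σ α : Equiv.Perm X) (lab : X → ZMod 3) : Prop :=
  ∀ (i : ZMod 3) (C : CWalk σ α), IsMonoCycle σ α lab i C →
    (∃ C', IsMonoCycle σ α lab (i - 1) C' ∧ C.Intersects C') ∧
    (∃ C', IsMonoCycle σ α lab (i + 1) C' ∧ C.Intersects C')

/-- Crossing Schnyder wood. -/
def CrossingSW {X : Type*} (σ α : Equiv.Perm X) (lab : X → ZMod 3) : Prop :=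
  ∀ (i : ZMod 3) (C : CWalk σ α), IsMonoCycle σ α lab i C →
    (∃ C', IsMonoCycle σ α lab (i - 1) C' ∧ CrossingCycles C C') ∧
    (∃ C', IsMonoCycle σ α lab (i + 1) C' ∧ CrossingCycles C C')

/-! ### Combinatorial maps -/

/-- A map on a compact orientable surface, as a rotation system: finitely many
darts, vertex rotation `σ` (counterclockwise), fixed-point-free edge involution
`α`; connectedness makes the embedding cellular. -/
structure CombMap where
  D : Type
  fin : Fintype D
  σ : Equiv.Perm D
  α : Equiv.Perm D
  α_invol : ∀ d, α (α d) = d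
  α_fixfree : ∀ d, α d ≠ d
  connected : ∀ d d', Relation.EqvGen (fun a b => b = σ a ∨ b = α a) d d'

attribute [instance] CombMap.fin

namespace CombMap

variable (M : CombMap)

def facePerm : Equiv.Perm M.D := fperm M.σ M.α

abbrev SameVertex (d d' : M.D) : Prop := M.σ.SameCycle d d'

abbrev SameFace (d d' : M.D) : Prop := M.facePerm.SameCycle d d'

/-- Closed walks of the (primal) map. -/
abbrev ClosedWalk := CWalk M.σ M.α

/-- Closed walks of the dual map (dual vertices = faces of `M`). -/
abbrev DualClosedWalk := CWalk M.facePerm M.α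

/-- Euler characteristic `V - E + F`; it equals `2 - 2g` where `g` is the genus
of the surface. -/
def eulerChar : ℤ :=
  (numOrbits M.σ : ℤ) - (numOrbits M.α : ℤ) + (numOrbits M.facePerm : ℤ)

/-- A closed walk is `0`-homologous; on the torus a cycle is contractible if
and only if its flow is `0`-homologous. -/
def FlowContractible (W : M.ClosedWalk) : Prop := W.flow ∈ facialSubgroup M.σ M.α

/-- No contractible loop. -/
def NoContractibleLoop : Prop :=
  ∀ d : M.D, M.SameVertex d (M.α d) → ¬ NullHomotopic M.σ M.α [d]

/-- No homotopic multiple edges: two parallel edges never bound a disk. -/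
def NoHomotopicMultiEdges : Prop :=
  ∀ d d' : M.D, M.SameVertex d d' → M.SameVertex (M.α d) (M.α d') →
    NullHomotopic M.σ M.α [d, M.α d'] → d' = d ∨ d' = M.α d

/-- A toroidal map: a map on the torus (Euler characteristic 0) without
contractible loop nor homotopic multiple edges. -/
def IsToroidal : Prop := M.eulerChar = 0 ∧ M.NoContractibleLoop ∧ M.NoHomotopicMultiEdges

/-- A triangulation: every face has size three. -/
def IsTriangulation : Prop := ∀ d, (M.facePerm ^ 3) d = d ∧ M.facePerm d ≠ d

/-- A simple map: no loops and no multiple edges. -/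
def Simple : Prop :=
  (∀ d : M.D, ¬ M.SameVertex d (M.α d)) ∧
    ∀ d d' : M.D, M.SameVertex d d' → M.SameVertex (M.α d) (M.α d') → d' = d ∨ d' = M.α d

/-- The pairing between a flow of `M` and a flow of its dual (the dual dart of
a dart being itself); this is twice the `β` of the paper, which is harmless. -/
def beta (p q : M.D → ℤ) : ℤ := ∑ d : M.D, p d * q d

/-- The characteristic flow of an oriented subgraph given by a set of darts. -/
def setFlow (S : Set M.D) : M.D → ℤ := fun d =>
  (if d ∈ S then (1 : ℤ) else 0) - (if M.α d ∈ S then 1 else 0)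

/-- The darts that are outgoing (in some colour) in a Schnyder wood: the
orientation of the map associated with the Schnyder wood. -/
def outSet (lab : M.D → ZMod 3) : Set M.D := {d | ∃ i, OutDart M.σ lab i d}

/-- The angle labelling of the dual Schnyder wood (the corner of the dual dart
`d` is the corner of `M` labelled by `facePerm d`). -/
def dualLab (lab : M.D → ZMod 3) : M.D → ZMod 3 := fun d => lab (M.facePerm d)

/-! #### The primal–dual completion `Ĝ` and its orientations

The edges of `Ĝ` are indexed by `M.D × Bool` : `(d, false)` joins the tail
vertex of `d` to the edge-vertex of the edge of `d`, and `(d, true)` joins the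
face on the left of `d` to this edge-vertex.  An orientation of `Ĝ` assigns
`true` to an edge when it is oriented from the primal/dual vertex towards the
edge-vertex (an "out-edge"). -/

/-- The orientation of `Ĝ` associated with an angle labelling: an edge of `Ĝ`
is an out-edge exactly when, crossing it counterclockwise around its
primal/dual vertex, the corner label increases by one. -/
def labOrientation (lab : M.D → ZMod 3) : M.D × Bool → Bool := fun x =>
  if x.2 = false then (if lab x.1 = lab (M.σ⁻¹ x.1) + 1 then true else false)
  else (if lab (M.facePerm x.1) = lab x.1 + 1 then true else false)

/-- A Schnyder orientation of `Ĝ`: an orientation corresponding to a Schnyder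
(EDGE) labelling of `M`. -/
def IsSchnyderOrientation (o : M.D × Bool → Bool) : Prop :=
  ∃ lab : M.D → ZMod 3, IsSchnyderLabeling M.σ M.α lab ∧ o = M.labOrientation lab

def outdegPrimal (o : M.D × Bool → Bool) (d0 : M.D) : ℕ :=
  Nat.card {d : M.D // M.SameVertex d0 d ∧ o (d, false) = true}

def outdegDual (o : M.D × Bool → Bool) (d0 : M.D) : ℕ :=
  Nat.card {d : M.D // M.SameFace d0 d ∧ o (d, true) = true}

def outdegEdge (o : M.D × Bool → Bool) (d0 : M.D) : ℕ :=
  (if o (d0, false) = false then 1 else 0) + (if o (M.α d0, false) = false then 1 else 0) +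
    (if o (d0, true) = false then 1 else 0) + (if o (M.α d0, true) = false then 1 else 0)

/-- A `mod₃`-orientation of `Ĝ`: primal- and dual-vertices have outdegree
divisible by 3, edge-vertices have outdegree `1 mod 3`. -/
def IsMod3Orientation (o : M.D × Bool → Bool) : Prop :=
  (∀ d0, 3 ∣ M.outdegPrimal o d0) ∧ (∀ d0, 3 ∣ M.outdegDual o d0) ∧
    ∀ d0, M.outdegEdge o d0 % 3 = 1

/-- `γ(C)` for a cycle `C` of `M`: the number of edges of `Ĝ` leaving `Ĉ` on
its right minus the number of edges of `Ĝ` leaving `Ĉ` on its left. -/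
def gammaPDC (o : M.D × Bool → Bool) (C : M.ClosedWalk) : ℤ :=
  (∑ k : Fin C.n, ∑ d : M.D,
      ((if ccwSector M.σ (M.α (C.darts (cyclicPrev C.pos k))) (C.darts k) d ∧
            o (d, false) = true then (1 : ℤ) else 0) -
        (if ccwSector M.σ (C.darts k) (M.α (C.darts (cyclicPrev C.pos k))) d ∧
            o (d, false) = true then 1 else 0))) +
    ∑ k : Fin C.n,
      ((if o (M.α (C.darts k), true) = false then (1 : ℤ) else 0) -
        (if o (C.darts k, true) = false then 1 else 0))

/-- A Schnyder wood is balanced when `γ(C) = 0` for every non-contractible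
cycle `C` of the map. -/
def BalancedLab (lab : M.D → ZMod 3) : Prop :=
  ∀ C : M.ClosedWalk, C.IsCycle → ¬ M.FlowContractible C →
    M.gammaPDC (M.labOrientation lab) C = 0

/-- `γ(C)` with respect to an orientation of the edges of `M` itself (the
simplified form of `γ` for triangulations): number of edges of `M` leaving `C`
on its right minus the number leaving `C` on its left. -/
def gammaSet (A : Set M.D) (C : M.ClosedWalk) : ℤ :=
  ∑ k : Fin C.n, ∑ d : M.D,
    ((if ccwSector M.σ (M.α (C.darts (cyclicPrev C.pos k))) (C.darts k) d ∧ d ∈ A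
        then (1 : ℤ) else 0) -
      (if ccwSector M.σ (C.darts k) (M.α (C.darts (cyclicPrev C.pos k))) d ∧ d ∈ A
        then 1 else 0))

/-- Balanced Schnyder wood of a toroidal triangulation (via the simplified
`γ` on the edges of `M`). -/
def BalancedTri (lab : M.D → ZMod 3) : Prop :=
  ∀ C : M.ClosedWalk, C.IsCycle → ¬ M.FlowContractible C →
    M.gammaSet (M.outSet lab) C = 0

/-! #### Orientations of the map itself -/

/-- An orientation of the edges of `M` (one dart chosen per edge). -/
def IsOrientation (A : Set M.D) : Prop := ∀ d, d ∈ A ↔ M.α d ∉ A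

/-- The characteristic flow of `D \ D'` for two orientations `A, A'`. -/
def orientDiffFlow (A A' : Set M.D) : M.D → ℤ := fun d =>
  if d ∈ A ∧ d ∉ A' then 1 else if d ∉ A ∧ d ∈ A' then -1 else 0

/-- A `0`-homologous flow is counterclockwise with respect to the face `f0`
(given by one of its darts) when it is a combination with nonnegative
coefficients of the facial flows of the faces different from `f0`. -/
def CCWFlow (f0 : M.D) (t : M.D → ℤ) : Prop :=
  ∃ c : M.D → ℕ, (∀ d, M.SameFace d f0 → c d = 0) ∧
    t = ∑ d : M.D, (c d : ℤ) • faceFlow M.σ M.α d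

def outAt (A : Set M.D) (d0 : M.D) : ℕ :=
  Nat.card {d : M.D // M.SameVertex d0 d ∧ d ∈ A}

/-- A 3-orientation: every vertex has outdegree exactly 3. -/
def IsThreeOrientation (A : Set M.D) : Prop :=
  M.IsOrientation A ∧ ∀ d0, M.outAt A d0 = 3

/-! #### Middle walks and middle cycles -/

/-- In a 3-orientation `A`, `b` is the middle outgoing edge after `d`: it
leaves the head of `d`, with exactly one outgoing dart strictly on each side of
the path `d, b`. -/
def IsMiddleSucc (A : Set M.D) (d b : M.D) : Prop :=
  b ∈ A ∧ M.σ.SameCycle (M.α d) b ∧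
    Nat.card {x : M.D // x ∈ A ∧ ccwSector M.σ (M.α d) b x} = 1 ∧
    Nat.card {x : M.D // x ∈ A ∧ ccwSector M.σ b (M.α d) x} = 1

/-- The middle walk: an infinite sequence of darts, each followed by the middle
outgoing edge at its head. -/
def IsMiddleWalk (A : Set M.D) (w : ℕ → M.D) : Prop :=
  w 0 ∈ A ∧ ∀ n, M.IsMiddleSucc A (w n) (w (n + 1))

/-- A middle cycle: a directed cycle such that every vertex on it has exactly
one edge leaving on the left of the cycle (and hence exactly one on the
right). -/
def IsMiddleCycle (A : Set M.D) (C : M.ClosedWalk) : Prop :=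
  C.IsCycle ∧ (∀ k, C.darts k ∈ A) ∧
    ∀ k, Nat.card {x : M.D // x ∈ A ∧
        ccwSector M.σ (C.darts (cyclicNext C.pos k)) (M.α (C.darts k)) x} = 1 ∧
      Nat.card {x : M.D // x ∈ A ∧
        ccwSector M.σ (M.α (C.darts k)) (C.darts (cyclicNext C.pos k)) x} = 1

end CombMap

/-! ### Universal covers -/

/-- A universal cover of the map `M`: a connected, simply connected covering of
(maps given by) rotation systems.  `p` commutes with the rotations, is a local
bijection on vertices, the cover is connected, and every closed walk of the
cover is null-homotopic (simple connectivity). -/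
structure UniversalCover (M : CombMap) where
  Dc : Type
  σ' : Equiv.Perm Dc
  α' : Equiv.Perm Dc
  α'_invol : ∀ x, α' (α' x) = x
  p : Dc → M.D
  p_surj : Function.Surjective p
  p_σ : ∀ x, p (σ' x) = M.σ (p x)
  p_α : ∀ x, p (α' x) = M.α (p x)
  locInj : ∀ x y, σ'.SameCycle x y → p x = p y → x = y
  connected : ∀ x y, Relation.EqvGen (fun a b => b = σ' a ∨ b = α' a) x y
  simplyConnected : ∀ W : CWalk σ' α', NullHomotopic σ' α' W.toList

/-- A set of darts closed under the vertex rotation: a set of vertices. -/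
def VertexClosed {X : Type*} (σ : Equiv.Perm X) (A : Set X) : Prop :=
  ∀ x y, σ.SameCycle x y → (x ∈ A ↔ y ∈ A)

/-- The set of darts meets at most two vertices. -/
def AtMostTwoVertexClasses {X : Type*} (σ : Equiv.Perm X) (A : Set X) : Prop :=
  ∃ a b : X, ∀ x ∈ A, σ.SameCycle x a ∨ σ.SameCycle x b

/-- Reachability in the graph of the map avoiding the vertices of `A`. -/
def ReachAvoiding {X : Type*} (σ α : Equiv.Perm X) (A : Set X) : X → X → Prop :=
  Relation.EqvGen fun u v => u ∉ A ∧ v ∉ A ∧ (v = σ u ∨ v = α u)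

/-- 3-connectivity of the graph of a (possibly infinite) rotation system: at
least four vertices, and removing any (at most) two vertices leaves it
connected. -/
def ThreeConnectedMap {X : Type*} (σ α : Equiv.Perm X) : Prop :=
  (∃ a b c d : X, ¬σ.SameCycle a b ∧ ¬σ.SameCycle a c ∧ ¬σ.SameCycle a d ∧
      ¬σ.SameCycle b c ∧ ¬σ.SameCycle b d ∧ ¬σ.SameCycle c d) ∧
    ∀ A : Set X, VertexClosed σ A → AtMostTwoVertexClasses σ A →
      ∀ x y, x ∉ A → y ∉ A → ReachAvoiding σ α A x y

/-- A map is essentially 3-connected when its universal cover is 3-connected. -/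
def CombMap.EssentiallyThreeConnected (M : CombMap) : Prop :=
  ∀ U : UniversalCover M, ThreeConnectedMap U.σ' U.α'

/-! ### Miscellaneous helpers -/

/-- The order relation of a distributive lattice structure. -/
def distribLE {T : Type*} (inst : DistribLattice T) : T → T → Prop :=
  (inst.toLattice.toSemilatticeSup.toPartialOrder.toPreorder.toLE).le

/-- The strict order relation of a linear order structure. -/
def linLT {T : Type*} (L : LinearOrder T) : T → T → Prop :=
  (L.toPartialOrder.toPreorder.toLT).lt

/-- A basic toroidal map: a non-contractible cycle on `n + 1` vertices together
with `n + 1` homologous non-contractible loops, one at each vertex.  Around the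
vertex `x`, the counterclockwise order of the darts is: `(x,0)` towards the
next vertex on the cycle, `(x,1)` the loop leaving, `(x,2)` towards the
previous vertex, `(x,3)` the loop returning. -/
def CombMap.IsBasic (M : CombMap) : Prop :=
  ∃ (n : ℕ) (e : M.D ≃ ZMod (n + 1) × Fin 4),
    (∀ (x : ZMod (n + 1)) (j : Fin 4), e (M.σ (e.symm (x, j))) = (x, j + 1)) ∧
      ∀ x : ZMod (n + 1),
        e (M.α (e.symm (x, 0))) = (x + 1, 2) ∧
        e (M.α (e.symm (x, 2))) = (x - 1, 0) ∧
        e (M.α (e.symm (x, 1))) = (x, 3) ∧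
        e (M.α (e.symm (x, 3))) = (x, 1)

/-!
An orientation of `Ĝ` is a Schnyder orientation exactly when it is induced by a `ℤ/3`-valued
labelling of the corners that increases by one across each out-edge of `Ĝ` and is constant across
each in-edge. Such a labelling exists iff the prescribed increments sum to zero around every closed
walk of the corner graph; around primal vertices, dual vertices and edge-vertices this is the
`mod₃` condition. Given it, integrate the increments around each primal vertex into a potential
`S`. What is left is a `ℤ/3`-valued cochain on the darts which is antisymmetric and
sums to zero around every face, so it sums to zero along every closed walk iff it does along a
homology basis. Along a closed walk `C` its sum is `-γ(C)` mod 3, because the edges of `Ĝ` leaving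
`C` on either side are counted by differences of `S`.
-/

end Schnyder

open Finset

namespace Equiv.Perm

variable {X G : Type*} [Fintype X] [AddCommGroup G]

theorem sum_sameCycle_apply (f : Perm X) (x : X) (u : X → G) :
    ∑ d ∈ univ.filter (f.SameCycle x ·), u (f d) = ∑ d ∈ univ.filter (f.SameCycle x ·), u d :=
  sum_equiv f (by simp [sameCycle_apply_right]) fun _ _ => rfl

theorem minimalPeriod_pos (f : Perm X) (x : X) : 0 < Function.minimalPeriod f x :=
  Function.minimalPeriod_pos_of_mem_periodicPts (f.injective.mem_periodicPts x)

theorem sum_sameCycle_eq_sum_range (f : Perm X) (x : X) (u : X → G) :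
    ∑ d ∈ univ.filter (f.SameCycle x ·), u d =
      ∑ l ∈ range (Function.minimalPeriod f x), u ((f ^ l) x) := by
  refine (sum_nbij (fun l => (f ^ l) x) ?_ ?_ ?_ fun _ _ => rfl).symm
  · exact fun l _ => mem_filter.2 ⟨mem_univ _, l, by simp⟩
  · intro a ha b hb hab
    exact Function.iterate_injOn_Iio_minimalPeriod (mem_range.1 ha) (mem_range.1 hb)
      (by simpa [iterate_eq_pow] using hab)
  · intro d hd
    obtain ⟨k, rfl⟩ := (mem_filter.1 hd).2.exists_nat_pow_eq
    refine ⟨k % Function.minimalPeriod f x, mem_range.2 (Nat.mod_lt _ (f.minimalPeriod_pos x)), ?_⟩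
    show (f ^ _) x = (f ^ k) x
    rw [← iterate_eq_pow, ← iterate_eq_pow]
    exact Function.iterate_mod_minimalPeriod_eq

theorem sum_range_pow_apply_eq_of_pow_apply_eq {f : Perm X} {w : X → G}
    (hw : ∀ x, ∑ d ∈ univ.filter (f.SameCycle x ·), w d = 0) {b : X} {k m : ℕ}
    (hkm : (f ^ k) b = (f ^ m) b) :
    ∑ l ∈ range k, w ((f ^ (l + 1)) b) = ∑ l ∈ range m, w ((f ^ (l + 1)) b) := by
  let T (k : ℕ) : G := ∑ l ∈ range k, w ((f ^ (l + 1)) b)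
  have hper : Function.Periodic T (Function.minimalPeriod f b) := by
    intro k
    have hp : Function.minimalPeriod f ((f ^ k) b) = Function.minimalPeriod f b := by
      rw [← iterate_eq_pow]
      exact Function.minimalPeriod_apply_iterate (f.injective.mem_periodicPts b) k
    have hblock : ∑ l ∈ range (Function.minimalPeriod f b), w ((f ^ (k + l + 1)) b) = 0 := by
      rw [← hp, ← hw ((f ^ k) b), ← sum_sameCycle_apply, sum_sameCycle_eq_sum_range]
      refine sum_congr rfl fun l _ => ?_
      rw [show k + l + 1 = (l + 1) + k by omega, pow_add, pow_succ']
      rfl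
    simp only [T, sum_range_add, hblock, add_zero]
  have hp0 := f.minimalPeriod_pos b
  have hmod : k % Function.minimalPeriod f b = m % Function.minimalPeriod f b := by
    refine (Function.iterate_eq_iterate_iff_of_lt_minimalPeriod
      (Nat.mod_lt _ hp0) (Nat.mod_lt _ hp0)).1 ?_
    rw [Function.iterate_mod_minimalPeriod_eq, Function.iterate_mod_minimalPeriod_eq,
      iterate_eq_pow, iterate_eq_pow, hkm]
  show T k = T m
  rw [← hper.map_mod_nat k, hmod, hper.map_mod_nat m]

theorem exists_potential_iff (f : Perm X) (w : X → G) :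
    (∃ S : X → G, ∀ x, S (f x) = S x + w (f x)) ↔
      ∀ x, ∑ d ∈ univ.filter (f.SameCycle x ·), w d = 0 := by
  constructor
  · rintro ⟨S, hS⟩ x
    have hw : ∀ d, w (f d) = S (f d) - S d := fun d => by rw [hS]; abel
    rw [← sum_sameCycle_apply, sum_congr rfl fun d _ => hw d, sum_sub_distrib,
      sum_sameCycle_apply, sub_self]
  · intro hw
    let r (x : X) : X := (Quotient.mk (SameCycle.setoid f) x).out
    have hr : ∀ x, f.SameCycle (r x) x := fun x => Quotient.mk_out (s := SameCycle.setoid f) x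
    choose k hk using fun x => (hr x).exists_nat_pow_eq
    refine ⟨fun x => ∑ l ∈ range (k x), w ((f ^ (l + 1)) (r x)), fun x => ?_⟩
    have hrf : r (f x) = r x :=
      congrArg Quotient.out (Quotient.sound (s := SameCycle.setoid f) ⟨-1, by simp⟩)
    have hfx : (f ^ (k x + 1)) (r x) = f x := by rw [pow_succ', mul_apply, hk]
    simp only [hrf]
    rw [sum_range_pow_apply_eq_of_pow_apply_eq hw (m := k x + 1) (by rw [← hrf, hk, hrf, hfx]),
      sum_range_succ, hfx]

theorem filter_ccwSector_eq_image {f : Perm X} {x y : X} {K : ℕ} (hK0 : 0 < K)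
    (hKy : (f ^ K) x = y) (hmin : ∀ j, 0 < j → j < K → (f ^ j) x ≠ y) :
    univ.filter (Schnyder.ccwSector f x y) = (Ico 1 K).image fun l => (f ^ l) x := by
  ext d
  simp only [Schnyder.ccwSector, mem_filter, mem_univ, true_and, mem_image, mem_Ico]
  constructor
  · rintro ⟨k, hk0, rfl, hk⟩
    exact ⟨k, ⟨hk0, lt_of_not_ge fun hKk => hk K hK0 hKk hKy⟩, rfl⟩
  · rintro ⟨l, ⟨hl1, hlK⟩, rfl⟩
    exact ⟨l, hl1, rfl, fun j hj hjl => hmin j hj (by omega)⟩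

theorem injOn_pow_apply_Ico {f : Perm X} {x y : X} {K : ℕ} (hKy : (f ^ K) x = y)
    (hmin : ∀ j, 0 < j → j < K → (f ^ j) x ≠ y) :
    Set.InjOn (fun l => (f ^ l) x) (Ico 1 K : Finset ℕ) := by
  have hKp : K ≤ Function.minimalPeriod f x := by
    by_contra! hlt
    have hpx : (f ^ Function.minimalPeriod f x) x = x := by
      rw [← iterate_eq_pow]
      exact Function.iterate_minimalPeriod
    refine hmin (K - Function.minimalPeriod f x) (by omega)
      (by have := f.minimalPeriod_pos x; omega) ?_
    conv_rhs => rw [← hKy, ← Nat.sub_add_cancel hlt.le]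
    rw [pow_add, mul_apply, hpx]
  intro a ha b hb hab
  simp only [coe_Ico, Set.mem_Ico] at ha hb
  exact Function.iterate_injOn_Iio_minimalPeriod (f := f) (x := x)
    (show a < _ by omega) (show b < _ by omega) (by simpa [iterate_eq_pow] using hab)

theorem sum_ccwSector {f : Perm X} {w S : X → G} (hS : ∀ x, S (f x) = S x + w (f x))
    {x y : X} (hxy : f.SameCycle x y) :
    ∑ d ∈ univ.filter (Schnyder.ccwSector f x y), w d = S (f⁻¹ y) - S x := by
  have hEx : ∃ k, 0 < k ∧ (f ^ k) x = y :=
    let ⟨i, hi, _, h⟩ := hxy.exists_pow_eq''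
    ⟨i, hi, h⟩
  obtain ⟨hK0, hKy⟩ := Nat.find_spec hEx
  have hmin : ∀ j, 0 < j → j < Nat.find hEx → (f ^ j) x ≠ y := fun j hj hjK h =>
    Nat.find_min hEx hjK ⟨hj, h⟩
  have hprev : (f ^ (Nat.find hEx - 1)) x = f⁻¹ y := by
    rw [eq_inv_iff_eq, ← mul_apply, ← pow_succ', Nat.sub_add_cancel hK0, hKy]
  have hstep : ∀ l, w ((f ^ (1 + l)) x) = S ((f ^ (l + 1)) x) - S ((f ^ l) x) := fun l => by
    rw [add_comm 1, pow_succ', mul_apply, hS]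
    abel
  rw [filter_ccwSector_eq_image hK0 hKy hmin, sum_image (injOn_pow_apply_Ico hKy hmin),
    sum_Ico_eq_sum_range, ← hprev]
  simp only [hstep]
  rw [sum_range_sub (fun l => S ((f ^ l) x)), pow_zero, one_apply]

end Equiv.Perm

namespace Schnyder

theorem cyclicNext_cyclicPrev {n : ℕ} (h : 0 < n) (k : Fin n) :
    cyclicNext h (cyclicPrev h k) = k := by
  ext
  simp only [cyclicNext, cyclicPrev, Nat.mod_add_mod]
  rw [show (k : ℕ) + (n - 1) + 1 = k + n by omega, Nat.add_mod_right, Nat.mod_eq_of_lt k.isLt]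

theorem cyclicPrev_cyclicNext {n : ℕ} (h : 0 < n) (k : Fin n) :
    cyclicPrev h (cyclicNext h k) = k := by
  ext
  simp only [cyclicNext, cyclicPrev, Nat.mod_add_mod]
  rw [show (k : ℕ) + 1 + (n - 1) = k + n by omega, Nat.add_mod_right, Nat.mod_eq_of_lt k.isLt]

def cyclicShift {n : ℕ} (h : 0 < n) : Fin n ≃ Fin n :=
  ⟨cyclicNext h, cyclicPrev h, cyclicPrev_cyclicNext h, cyclicNext_cyclicPrev h⟩

variable {X G : Type*} [AddCommGroup G] {σ α : Equiv.Perm X}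

namespace CWalk

theorem sameCycle_prev (W : CWalk σ α) (k : Fin W.n) :
    σ.SameCycle (α (W.darts (cyclicPrev W.pos k))) (W.darts k) := by
  simpa [cyclicNext_cyclicPrev] using W.chain (cyclicPrev W.pos k)

theorem sum_darts_prev (W : CWalk σ α) (u : X → G) :
    ∑ k, u (W.darts (cyclicPrev W.pos k)) = ∑ k, u (W.darts k) :=
  (cyclicShift W.pos).symm.sum_comp fun k => u (W.darts k)

theorem sum_map_toList (W : CWalk σ α) (u : X → G) :
    (W.toList.map u).sum = ∑ k, u (W.darts k) := by
  simp [toList, List.map_ofFn, List.sum_ofFn]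

theorem sum_flow_smul [Fintype X] (hα : Function.Involutive α) {t : X → G}
    (ht : ∀ d, t (α d) = -t d) (W : CWalk σ α) :
    ∑ d, W.flow d • t d = 2 • ∑ k, t (W.darts k) := by
  calc ∑ d, W.flow d • t d
      = ∑ k, ∑ d, ((if W.darts k = d then (1 : ℤ) else 0) -
          (if W.darts k = α d then 1 else 0)) • t d := by
        simp only [flow, sum_smul]
        exact sum_comm
    _ = ∑ k, 2 • t (W.darts k) := sum_congr rfl fun k _ => by
        simp only [sub_smul, ite_smul, one_smul, zero_smul, sum_sub_distrib, ← hα.eq_iff,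
          sum_ite_eq, mem_univ, if_true, ht, sub_neg_eq_add, two_nsmul]
    _ = 2 • ∑ k, t (W.darts k) := (smul_sum ..).symm

end CWalk

theorem sum_faceFlow_smul [Fintype X] {t : X → G}
    (ht : ∀ d, t (α d) = -t d) (d0 : X) :
    ∑ d, faceFlow σ α d0 d • t d = 2 • ∑ d ∈ univ.filter ((fperm σ α).SameCycle d0 ·), t d := by
  let u (d : X) : G := if (fperm σ α).SameCycle d0 d then t d else 0
  have hu : ∀ d, faceFlow σ α d0 d • t d = u d + u (α d) := fun d => by
    by_cases h : (fperm σ α).SameCycle d0 d <;> by_cases h' : (fperm σ α).SameCycle d0 (α d) <;>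
      simp [faceFlow, u, h, h', ht]
  rw [sum_congr rfl fun d _ => hu d, sum_add_distrib, Equiv.sum_comp α u, ← two_nsmul,
    sum_filter]

theorem two_nsmul_sum_eq_zero_of_isHomologyBasis [Fintype X] {ι : Type*} [Fintype ι]
    {B : ι → CWalk σ α} (hB : IsHomologyBasis σ α B) (hα : Function.Involutive α) {t : X → G}
    (ht : ∀ d, t (α d) = -t d)
    (hface : ∀ d0, ∑ d ∈ univ.filter ((fperm σ α).SameCycle d0 ·), t d = 0)
    (hBt : ∀ i, ∑ k, t ((B i).darts k) = 0) (W : CWalk σ α) :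
    2 • ∑ k, t (W.darts k) = 0 := by
  let β : (X → ℤ) →+ G := (Fintype.linearCombination ℤ t).toAddMonoidHom
  have hβ : ∀ f, β f = ∑ d, f d • t d := Fintype.linearCombination_apply ℤ t
  have hfacial : facialSubgroup σ α ≤ β.ker := by
    refine (AddSubgroup.closure_le _).2 ?_
    rintro _ ⟨d0, rfl⟩
    simp [AddMonoidHom.mem_ker, hβ, sum_faceFlow_smul ht, hface]
  obtain ⟨μ, hμ⟩ := hB W
  rw [← W.sum_flow_smul hα ht, ← hβ, ← sub_add_cancel W.flow (∑ i, μ i • (B i).flow), map_add,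
    AddMonoidHom.mem_ker.1 (hfacial hμ), map_sum]
  simp only [map_zsmul]
  simp only [hβ, CWalk.sum_flow_smul hα ht, hBt, smul_zero, sum_const_zero, add_zero]


def IsWalk (σ α : Equiv.Perm X) : X → X → List X → Prop
  | a, b, [] => σ.SameCycle a b
  | a, b, d :: L => σ.SameCycle a d ∧ IsWalk σ α (α d) b L

namespace IsWalk

variable {a b c : X} {L L' : List X}

theorem of_sameCycle_left (h : σ.SameCycle a b) (hw : IsWalk σ α b c L) : IsWalk σ α a c L := by
  cases L with
  | nil => exact h.trans hw
  | cons d L => exact ⟨h.trans hw.1, hw.2⟩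

theorem of_sameCycle_right (h : σ.SameCycle b c) (hw : IsWalk σ α a b L) : IsWalk σ α a c L := by
  induction L generalizing a with
  | nil => exact hw.trans h
  | cons d L ih => exact ⟨hw.1, ih hw.2⟩

theorem append (hw : IsWalk σ α a b L) (hw' : IsWalk σ α b c L') :
    IsWalk σ α a c (L ++ L') := by
  induction L generalizing a with
  | nil => exact hw'.of_sameCycle_left hw
  | cons d L ih => exact ⟨hw.1, ih hw.2⟩

theorem reverse (hα : Function.Involutive α) (hw : IsWalk σ α a b L) :
    IsWalk σ α b a (L.reverse.map α) := by
  induction L generalizing a with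
  | nil => exact hw.symm
  | cons d L ih =>
    simpa using (ih hw.2).append (show IsWalk σ α (α d) a [α d] from ⟨.refl _ _, by
      simpa [IsWalk, hα d] using hw.1.symm⟩)

theorem sameCycle_getElem (hw : IsWalk σ α a b L) (i : ℕ) (hi : i + 1 < L.length) :
    σ.SameCycle (α L[i]) L[i + 1] := by
  induction L generalizing a i with
  | nil => simp at hi
  | cons d L ih =>
    cases i with
    | zero =>
      cases L with
      | nil => simp at hi
      | cons e L => exact hw.2.1
    | succ i => exact ih hw.2 i (by simpa using hi)

theorem sameCycle_getLast (hw : IsWalk σ α a b L) (hL : L ≠ []) :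
    σ.SameCycle (α (L.getLast hL)) b := by
  induction L generalizing a with
  | nil => contradiction
  | cons d L ih =>
    cases L with
    | nil => exact hw.2
    | cons e L => simpa using ih hw.2 (List.cons_ne_nil e L)

theorem exists_toList_eq (hw : IsWalk σ α a a L) (hL : L ≠ []) :
    ∃ W : CWalk σ α, W.toList = L := by
  have hpos : 0 < L.length := List.length_pos_iff.2 hL
  refine ⟨⟨L.length, hpos, fun k => L[k], fun k => ?_⟩, List.ofFn_getElem⟩
  by_cases hk : (k : ℕ) + 1 < L.length
  · have : cyclicNext hpos k = ⟨k + 1, hk⟩ := Fin.ext (Nat.mod_eq_of_lt hk)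
    rw [this]
    exact hw.sameCycle_getElem k hk
  · have hlast : (k : ℕ) = L.length - 1 := by omega
    have : cyclicNext hpos k = ⟨0, hpos⟩ :=
      Fin.ext (by simp [cyclicNext, hlast, Nat.sub_add_cancel hpos])
    rw [this]
    obtain ⟨d, L, rfl⟩ := List.exists_cons_of_ne_nil hL
    simpa [hlast, List.getLast_eq_getElem] using (hw.sameCycle_getLast hL).trans hw.1

theorem sum_map_eq (hα : Function.Involutive α) {t : X → G} (ht : ∀ d, t (α d) = -t d)
    (hclosed : ∀ W : CWalk σ α, ∑ k, t (W.darts k) = 0)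
    (hw : IsWalk σ α a b L) (hw' : IsWalk σ α a b L') : (L.map t).sum = (L'.map t).sum := by
  have hrev : ∀ M : List X, ((M.reverse.map α).map t).sum = -(M.map t).sum := by
    intro M
    rw [List.map_map, List.map_reverse, List.sum_reverse]
    induction M with
    | nil => simp
    | cons d M ih => simp [ht, ih, add_comm]
  rcases eq_or_ne (L ++ L'.reverse.map α) [] with h | h
  · simp_all
  · obtain ⟨W, hW⟩ := (hw.append (hw'.reverse hα)).exists_toList_eq h
    have := hclosed W
    rw [← W.sum_map_toList, hW, List.map_append, List.sum_append, hrev] at this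
    exact eq_of_sub_eq_zero (by rwa [sub_eq_add_neg])

theorem exists_isWalk (hα : Function.Involutive α)
    (h : Relation.EqvGen (fun a b => b = σ a ∨ b = α a) a b) : ∃ L, IsWalk σ α a b L := by
  induction h with
  | rel x y hxy =>
    rcases hxy with rfl | rfl
    · exact ⟨[], 1, by simp⟩
    · exact ⟨[x], .refl _ _, .refl _ _⟩
  | refl x => exact ⟨[], .refl _ _⟩
  | symm x y _ ih =>
    obtain ⟨L, hL⟩ := ih
    exact ⟨_, hL.reverse hα⟩
  | trans x y z _ _ ih ih' =>
    obtain ⟨L, hL⟩ := ih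
    obtain ⟨L', hL'⟩ := ih'
    exact ⟨_, hL.append hL'⟩

end IsWalk

theorem exists_potential_of_sum_darts_eq_zero
    (hconn : ∀ a b, Relation.EqvGen (fun a b => b = σ a ∨ b = α a) a b)
    (hα : Function.Involutive α) {t : X → G} (ht : ∀ d, t (α d) = -t d)
    (hclosed : ∀ W : CWalk σ α, ∑ k, t (W.darts k) = 0) :
    ∃ c : X → G, (∀ d, c (σ d) = c d) ∧ ∀ d, c (α d) = c d + t d := by
  rcases isEmpty_or_nonempty X with hX | ⟨⟨a⟩⟩
  · exact ⟨0, isEmptyElim, isEmptyElim⟩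
  choose L hL using fun b => IsWalk.exists_isWalk hα (hconn a b)
  refine ⟨fun b => ((L b).map t).sum, fun d => ?_, fun d => ?_⟩
  · exact IsWalk.sum_map_eq hα ht hclosed (hL (σ d)) ((hL d).of_sameCycle_right ⟨1, by simp⟩)
  · show ((L (α d)).map t).sum = ((L d).map t).sum + t d
    rw [IsWalk.sum_map_eq hα ht hclosed (hL (α d))
      ((hL d).append (show IsWalk σ α d (α d) [d] from ⟨.refl _ _, .refl _ _⟩))]
    simp


theorem edgePattern_iff (x : Fin 4 → ZMod 3) :
    edgePattern x ↔ ∀ j : Fin 4, x (j + 1) = x j ∨ x (j + 1) = x j + 1 := by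
  revert x
  unfold edgePattern
  decide

namespace CombMap

variable (M : CombMap) (o : M.D × Bool → Bool)

theorem facePerm_apply (d : M.D) : M.facePerm d = M.σ⁻¹ (M.α d) := rfl

theorem σ_facePerm (d : M.D) : M.σ (M.facePerm d) = M.α d := by
  simp [facePerm_apply]

theorem facePerm_α (d : M.D) : M.facePerm (M.α d) = M.σ⁻¹ d := by
  rw [facePerm_apply, M.α_invol]

def primalOut (d : M.D) : ZMod 3 := if o (d, false) = true then 1 else 0

def dualOut (d : M.D) : ZMod 3 := if o (d, true) = true then 1 else 0

theorem outdegPrimal_cast (d0 : M.D) :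
    (M.outdegPrimal o d0 : ZMod 3) = ∑ d ∈ univ.filter (M.σ.SameCycle d0 ·), M.primalOut o d := by
  rw [outdegPrimal, Nat.card_eq_fintype_card, Fintype.card_subtype, natCast_card_filter,
    sum_filter]
  refine sum_congr rfl fun d _ => ?_
  by_cases h : M.σ.SameCycle d0 d <;> simp [primalOut, h]

theorem outdegDual_cast (d0 : M.D) :
    (M.outdegDual o d0 : ZMod 3) =
      ∑ d ∈ univ.filter (M.facePerm.SameCycle d0 ·), M.dualOut o d := by
  rw [outdegDual, Nat.card_eq_fintype_card, Fintype.card_subtype, natCast_card_filter,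
    sum_filter]
  refine sum_congr rfl fun d _ => ?_
  by_cases h : M.facePerm.SameCycle d0 d <;> simp [dualOut, h]

theorem outdegEdge_mod_three_eq_one_iff (d : M.D) :
    M.outdegEdge o d % 3 = 1 ↔
      M.primalOut o d + M.primalOut o (M.α d) + M.dualOut o d + M.dualOut o (M.α d) = 0 := by
  unfold outdegEdge primalOut dualOut
  cases o (d, false) <;> cases o (M.α d, false) <;> cases o (d, true) <;>
    cases o (M.α d, true) <;> decide

theorem isMod3Orientation_iff : M.IsMod3Orientation o ↔
    (∀ d0, ∑ d ∈ univ.filter (M.σ.SameCycle d0 ·), M.primalOut o d = 0) ∧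
    (∀ d0, ∑ d ∈ univ.filter (M.facePerm.SameCycle d0 ·), M.dualOut o d = 0) ∧
    ∀ d, M.primalOut o d + M.primalOut o (M.α d) + M.dualOut o d + M.dualOut o (M.α d) = 0 := by
  simp only [IsMod3Orientation, ← ZMod.natCast_eq_zero_iff, outdegPrimal_cast, outdegDual_cast,
    outdegEdge_mod_three_eq_one_iff]

theorem isSchnyderLabeling_iff (lab : M.D → ZMod 3) :
    IsSchnyderLabeling M.σ M.α lab ↔
      (∀ d, lab (M.σ d) = lab d ∨ lab (M.σ d) = lab d + 1) ∧
        ∀ d, lab (M.facePerm d) = lab d ∨ lab (M.facePerm d) = lab d + 1 := by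
  simp only [IsSchnyderLabeling, EdgeCond, edgePattern_iff]
  constructor
  · intro h
    exact ⟨fun d => by simpa using h (M.σ d) 3, fun d => by simpa [facePerm_apply] using h d 0⟩
  · rintro ⟨hσ, hφ⟩ d j
    fin_cases j
    · simpa [facePerm_apply] using hφ d
    · simpa using hσ (M.σ⁻¹ (M.α d))
    · simpa [facePerm_α] using hφ (M.α d)
    · simpa using hσ (M.σ⁻¹ d)

/-- `lab` labels the corners so that it increases by one exactly across the out-edges of `Ĝ`:
from the corner of `d` to that of `σ d` one crosses the edge `(σ d, false)`, from the corner of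
`d` to that of `facePerm d` the edge `(d, true)`. -/
def IsCornerPotential (lab : M.D → ZMod 3) : Prop :=
  (∀ d, lab (M.σ d) = lab d + M.primalOut o (M.σ d)) ∧
    ∀ d, lab (M.facePerm d) = lab d + M.dualOut o d

theorem isSchnyderOrientation_iff :
    M.IsSchnyderOrientation o ↔ ∃ lab, M.IsCornerPotential o lab := by
  have hne : ∀ a : ZMod 3, a ≠ a + 1 := by decide
  constructor
  · rintro ⟨lab, hlab, rfl⟩
    obtain ⟨hσ, hφ⟩ := (M.isSchnyderLabeling_iff lab).1 hlab
    refine ⟨lab, fun d => ?_, fun d => ?_⟩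
    · rcases hσ d with h | h <;> simp [primalOut, labOrientation, h, hne]
    · rcases hφ d with h | h <;> simp [dualOut, labOrientation, h, hne]
  · rintro ⟨lab, hσ, hφ⟩
    have hσ' : ∀ d, lab d = lab (M.σ⁻¹ d) + M.primalOut o d := fun d => by
      simpa using hσ (M.σ⁻¹ d)
    refine ⟨lab, (M.isSchnyderLabeling_iff lab).2 ⟨fun d => ?_, fun d => ?_⟩, ?_⟩
    · rw [hσ]
      unfold primalOut
      split_ifs <;> simp
    · rw [hφ]
      unfold dualOut
      split_ifs <;> simp
    · funext ⟨d, b⟩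
      cases b
      · cases h : o (d, false) <;> simp [labOrientation, hσ' d, primalOut, h, hne]
      · cases h : o (d, true) <;> simp [labOrientation, hφ d, dualOut, h, hne]

/-- If `S` increases by `primalOut` around every vertex, then `S + c` is a corner potential iff
`c` is constant on vertices and increases by `edgeShift S d` along every dart `d`. -/
def edgeShift (S : M.D → ZMod 3) (d : M.D) : ZMod 3 :=
  M.dualOut o d + M.primalOut o (M.α d) + S d - S (M.α d)

namespace IsCornerPotential

variable {M o} {lab : M.D → ZMod 3}

theorem apply_α (h : M.IsCornerPotential o lab) (d : M.D) :
    lab (M.α d) = lab d + M.dualOut o d + M.primalOut o (M.α d) := by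
  have := h.1 (M.facePerm d)
  rwa [σ_facePerm, h.2] at this

theorem of_apply_α (hσ : ∀ d, lab (M.σ d) = lab d + M.primalOut o (M.σ d))
    (hα : ∀ d, lab (M.α d) = lab d + M.dualOut o d + M.primalOut o (M.α d)) :
    M.IsCornerPotential o lab := by
  refine ⟨hσ, fun d => ?_⟩
  have := hσ (M.facePerm d)
  rw [σ_facePerm, hα] at this
  linear_combination -this

theorem edge_sum (h : M.IsCornerPotential o lab) (d : M.D) :
    M.primalOut o d + M.primalOut o (M.α d) + M.dualOut o d + M.dualOut o (M.α d) = 0 := by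
  have h1 := h.apply_α d
  have h2 := h.apply_α (M.α d)
  rw [M.α_invol] at h2
  linear_combination -h1 - h2

theorem sum_face_dualOut (h : M.IsCornerPotential o lab) (d0 : M.D) :
    ∑ d ∈ univ.filter (M.facePerm.SameCycle d0 ·), M.dualOut o d = 0 := by
  have hη : ∀ d, M.dualOut o d = lab (M.facePerm d) - lab d := fun d => by rw [h.2]; ring
  simp only [hη, sum_sub_distrib, Equiv.Perm.sum_sameCycle_apply, sub_self]

theorem edgeShift_eq_zero (h : M.IsCornerPotential o lab) (d : M.D) :
    M.edgeShift o lab d = 0 := by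
  rw [edgeShift, h.apply_α]
  ring

end IsCornerPotential

section Potential

variable {M o} {S : M.D → ZMod 3}

theorem edgeShift_α
    (he : ∀ d, M.primalOut o d + M.primalOut o (M.α d) + M.dualOut o d + M.dualOut o (M.α d) = 0)
    (d : M.D) : M.edgeShift o S (M.α d) = -M.edgeShift o S d := by
  rw [edgeShift, edgeShift, M.α_invol]
  linear_combination he d

variable (hS : ∀ d, S (M.σ d) = S d + M.primalOut o (M.σ d))
include hS

theorem IsCornerPotential.add {c : M.D → ZMod 3} (hcσ : ∀ d, c (M.σ d) = c d)
    (hcα : ∀ d, c (M.α d) = c d + M.edgeShift o S d) : M.IsCornerPotential o (S + c) := by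
  refine .of_apply_α (fun d => ?_) fun d => ?_
  · simp only [Pi.add_apply, hS, hcσ]
    ring
  · simp only [Pi.add_apply, hcα, edgeShift]
    ring

theorem sum_face_edgeShift
    (hf : ∀ d0, ∑ d ∈ univ.filter (M.facePerm.SameCycle d0 ·), M.dualOut o d = 0) (d0 : M.D) :
    ∑ d ∈ univ.filter (M.facePerm.SameCycle d0 ·), M.edgeShift o S d = 0 := by
  have h : ∀ d, M.edgeShift o S d = M.dualOut o d + (S d - S (M.facePerm d)) := fun d => by
    rw [edgeShift, ← σ_facePerm, hS, σ_facePerm]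
    ring
  simp only [h, sum_add_distrib, sum_sub_distrib, hf, Equiv.Perm.sum_sameCycle_apply, sub_self,
    add_zero]

variable
  (he : ∀ d, M.primalOut o d + M.primalOut o (M.α d) + M.dualOut o d + M.dualOut o (M.α d) = 0)
include he

theorem cast_gammaPDC (C : M.ClosedWalk) :
    (M.gammaPDC o C : ZMod 3) = -∑ k, M.edgeShift o S (C.darts k) := by
  have hsector : ∀ x y, M.σ.SameCycle x y →
      (∑ d, if ccwSector M.σ x y d ∧ o (d, false) = true then (1 : ZMod 3) else 0) =
        S y - M.primalOut o y - S x := by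
    intro x y hxy
    have hy : S y = S (M.σ⁻¹ y) + M.primalOut o y := by simpa using hS (M.σ⁻¹ y)
    rw [hy, add_sub_cancel_right, ← Equiv.Perm.sum_ccwSector hS hxy, sum_filter]
    refine sum_congr rfl fun d _ => ?_
    by_cases h : ccwSector M.σ x y d <;> simp [primalOut, h]
  have hdual : ∀ d, (if o (d, true) = false then (1 : ZMod 3) else 0) = 1 - M.dualOut o d := by
    intro d
    cases h : o (d, true) <;> simp [dualOut, h]
  have h3 : (3 : ZMod 3) = 0 := rfl
  unfold gammaPDC
  push_cast
  rw [← sum_add_distrib]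
  let P (d : M.D) : ZMod 3 :=
    2 * S d - M.primalOut o d + M.dualOut o d - M.dualOut o (M.α d)
  let Q (d : M.D) : ZMod 3 := M.primalOut o (M.α d) - 2 * S (M.α d)
  calc _ = ∑ k, (P (C.darts k) + Q (C.darts (cyclicPrev C.pos k))) :=
        sum_congr rfl fun k _ => by
          rw [sum_sub_distrib, hsector _ _ (C.sameCycle_prev k),
            hsector _ _ (C.sameCycle_prev k).symm, hdual, hdual]
          ring
    _ = ∑ k, (P (C.darts k) + Q (C.darts k)) := by
        rw [sum_add_distrib, sum_add_distrib, C.sum_darts_prev Q]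
    _ = _ := by
        rw [← sum_neg_distrib]
        refine sum_congr rfl fun k _ => ?_
        simp only [P, Q, edgeShift]
        linear_combination -he (C.darts k) + (S (C.darts k) - S (M.α (C.darts k)) +
          M.primalOut o (M.α (C.darts k)) + M.dualOut o (C.darts k)) * h3

theorem three_dvd_gammaPDC_iff (C : M.ClosedWalk) :
    (3 : ℤ) ∣ M.gammaPDC o C ↔ ∑ k, M.edgeShift o S (C.darts k) = 0 := by
  rw [← neg_eq_zero, ← cast_gammaPDC hS he, ZMod.intCast_zmod_eq_zero_iff_dvd]
  rfl

theorem sum_edgeShift_eq_zero_of_isHomologyBasis {ι : Type*} [Fintype ι]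
    {B : ι → M.ClosedWalk} (hB : IsHomologyBasis M.σ M.α B)
    (hf : ∀ d0, ∑ d ∈ univ.filter (M.facePerm.SameCycle d0 ·), M.dualOut o d = 0)
    (hBS : ∀ i, ∑ k, M.edgeShift o S ((B i).darts k) = 0) (W : M.ClosedWalk) :
    ∑ k, M.edgeShift o S (W.darts k) = 0 := by
  have h2 : ∀ x : ZMod 3, 2 • x = 0 → x = 0 := by decide
  exact h2 _ (two_nsmul_sum_eq_zero_of_isHomologyBasis hB M.α_invol (edgeShift_α he)
    (sum_face_edgeShift hS hf) hBS W)

end Potential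

end CombMap

theorem schnyder_orientation_characterization_general
    (M : CombMap) (g : ℕ)
    (B : Fin (2 * g) → M.ClosedWalk)
    (hB : IsHomologyBasis M.σ M.α B)
    (o : M.D × Bool → Bool) :
    M.IsSchnyderOrientation o ↔
      M.IsMod3Orientation o ∧ ∀ i, (3 : ℤ) ∣ M.gammaPDC o (B i) := by
  rw [M.isSchnyderOrientation_iff, M.isMod3Orientation_iff]
  constructor
  · rintro ⟨lab, hlab⟩
    refine ⟨⟨(Equiv.Perm.exists_potential_iff _ _).1 ⟨lab, hlab.1⟩, hlab.sum_face_dualOut,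
      hlab.edge_sum⟩, fun i => ?_⟩
    rw [CombMap.three_dvd_gammaPDC_iff hlab.1 hlab.edge_sum]
    simp [hlab.edgeShift_eq_zero]
  · rintro ⟨⟨hv, hf, he⟩, hγ⟩
    obtain ⟨S, hS⟩ := (Equiv.Perm.exists_potential_iff _ _).2 hv
    have hW := CombMap.sum_edgeShift_eq_zero_of_isHomologyBasis hS he hB hf
      fun i => (CombMap.three_dvd_gammaPDC_iff hS he _).1 (hγ i)
    obtain ⟨c, hcσ, hcα⟩ :=
      exists_potential_of_sum_darts_eq_zero M.connected M.α_invol (CombMap.edgeShift_α he) hW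
    exact ⟨S + c, .add hS hcσ hcα⟩

/-- Let `G` be a map on an orientable surface of genus `g`
and let `B₁, …, B₂g` be a set of cycles of `G` forming a homology-basis.  An
orientation of the primal–dual completion `Ĝ` is a Schnyder orientation if and
only if it is a `mod₃`-orientation such that `γ(Bᵢ) ≡ 0 (mod 3)` for all `i`. -/
theorem schnyder_orientation_characterization
    (M : CombMap) (g : ℕ) (hgenus : M.eulerChar = 2 - 2 * (g : ℤ))
    (hloop : M.NoContractibleLoop) (hmulti : M.NoHomotopicMultiEdges)
    (B : Fin (2 * g) → M.ClosedWalk) (hBc : ∀ i, (B i).IsCycle)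
    (hB : IsHomologyBasis M.σ M.α B)
    (o : M.D × Bool → Bool) :
    M.IsSchnyderOrientation o ↔
      M.IsMod3Orientation o ∧ ∀ i, (3 : ℤ) ∣ M.gammaPDC o (B i) :=
  schnyder_orientation_characterization_general M g B hB o

end Schnyder
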